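/- Let A be a finite set, n ∈ ℕ, and let X ⊆ A^n contain at least five elements. Let P ⊆ Sym(A^n) be the set of all 3-cycles (x y z) of distinct elements x, y, z ∈ X. Then every 2-controlled P-permutation of A^{2+n} belongs to the subgroup of Sym(A^{2+n}) generated by all extensions to arity 2+n of 1-controlled P-permutations (which are permutations of A^{1+n}). -/

import Mathlib

/-- The wire permutation `π_α` of `A^n` induced by `α ∈ S_n`: `π_α(x) i = x (α⁻¹ i)`. -/
def wirePerm {A : Type*} {n : ℕ} (α : Equiv.Perm (Fin n)) : Equiv.Perm (Fin n → A) :=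
  Equiv.arrowCongr α (Equiv.refl A)

/-- Splitting `A^(k+ℓ)` into `A^k × A^ℓ`. -/
def splitEquiv (A : Type*) (k ℓ : ℕ) : (Fin (k + ℓ) → A) ≃ (Fin k → A) × (Fin ℓ → A) :=
  (Equiv.arrowCongr finSumFinEquiv.symm (Equiv.refl A)).trans
    (Equiv.sumArrowEquivProdArrow _ _ A)

/-- `f ⊕ id`: the permutation of `A^n` acting as `f` on the first `ℓ` coordinates and
fixing the remaining ones. -/
def oplusId {A : Type*} {ℓ n : ℕ} (h : ℓ ≤ n) (f : Equiv.Perm (Fin ℓ → A)) :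
    Equiv.Perm (Fin n → A) :=
  (((Equiv.arrowCongr (finCongr (Nat.add_sub_cancel' h).symm) (Equiv.refl A)).trans
    (splitEquiv A ℓ (n - ℓ))).symm).permCongr
      (Equiv.prodCongr f (Equiv.refl (Fin (n - ℓ) → A)))

/-- `g ∈ Sym(A^n)` is an extension of `f ∈ Sym(A^ℓ)` iff it is a conjugate of `f ⊕ id`
by a wire permutation. -/
def IsExtensionOf {A : Type*} {ℓ n : ℕ} (f : Equiv.Perm (Fin ℓ → A))
    (g : Equiv.Perm (Fin n → A)) : Prop :=
  ∃ (h : ℓ ≤ n) (α : Equiv.Perm (Fin n)),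
    g = wirePerm α * oplusId h f * (wirePerm α)⁻¹

/-- The `w`-controlled permutation `f_{w,p}` of `A^(k+ℓ)`: maps `(u,v)` to `(u, p v)`
if `u = w` and fixes it otherwise. -/
def controlledPerm {A : Type*} [DecidableEq A] {k ℓ : ℕ} (w : Fin k → A)
    (p : Equiv.Perm (Fin ℓ → A)) : Equiv.Perm (Fin (k + ℓ) → A) :=
  (splitEquiv A k ℓ).symm.permCongr
    { toFun := fun uv => (uv.1, if uv.1 = w then p uv.2 else uv.2)
      invFun := fun uv => (uv.1, if uv.1 = w then p.symm uv.2 else uv.2)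
      left_inv := fun uv => by by_cases h : uv.1 = w <;> simp [h, Prod.ext_iff]
      right_inv := fun uv => by by_cases h : uv.1 = w <;> simp [h, Prod.ext_iff] }

/-- The `k`-controlled `P`-permutations of `A^(k+ℓ)`: wire-permutation conjugates of the
permutations `f_{w,p}` with `p ∈ P`. -/
def ControlledPerms {A : Type*} [DecidableEq A] {ℓ : ℕ} (k : ℕ)
    (P : Set (Equiv.Perm (Fin ℓ → A))) : Set (Equiv.Perm (Fin (k + ℓ) → A)) :=
  { g | ∃ w : Fin k → A, ∃ p ∈ P, ∃ α : Equiv.Perm (Fin (k + ℓ)),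
      g = wirePerm α * controlledPerm w p * (wirePerm α)⁻¹ }

/-!
A 3-cycle of points of `X` is a commutator of two 3-cycles of points of `X`:
`(x y z) = ⁅(x y u), (x z v)⁆` for any two further points `u ≠ v` of `X`, which exist since
`|X| ≥ 5`. Applying `⁅p, q⁆` to the target wires when the two control wires carry `(w₀, w₁)` is the
commutator of applying `p` when wire `0` carries `w₀` and applying `q` when wire `1` carries `w₁`:
wherever one of the two conditions fails, one of the factors acts as the identity. Each of these
two singly controlled permutations is an extension of a `1`-controlled 3-cycle, and conjugating by
a wire permutation maps extensions to extensions.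
-/

open Equiv
open scoped commutatorElement

theorem swap_mul_swap_eq_commutatorElement {β : Type*} [DecidableEq β] {x y z u v : β}
    (hxy : x ≠ y) (hxz : x ≠ z) (hyz : y ≠ z) (hux : u ≠ x) (huy : u ≠ y) (huz : u ≠ z)
    (hvx : v ≠ x) (hvy : v ≠ y) (hvz : v ≠ z) (huv : u ≠ v) :
    swap x y * swap y z = ⁅swap x y * swap y u, swap x z * swap z v⁆ := by
  ext t
  simp only [commutatorElement_def, mul_inv_rev, swap_inv, Perm.mul_apply]
  by_cases hx : t = x
  · subst hx; simp [swap_apply_of_ne_of_ne, *, Ne.symm]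
  by_cases hy : t = y
  · subst hy; simp [swap_apply_of_ne_of_ne, *, Ne.symm]
  by_cases hz : t = z
  · subst hz; simp [swap_apply_of_ne_of_ne, *, Ne.symm]
  by_cases hu : t = u
  · subst hu; simp [swap_apply_of_ne_of_ne, *, Ne.symm]
  by_cases hv : t = v
  · subst hv; simp [swap_apply_of_ne_of_ne, *, Ne.symm]
  simp [swap_apply_of_ne_of_ne, *]

theorem Subgroup.commutatorElement_mem {G : Type*} [Group G] (H : Subgroup G) {a b : G}
    (ha : a ∈ H) (hb : b ∈ H) : ⁅a, b⁆ ∈ H :=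
  H.commutator_le_self (Subgroup.commutator_mem_commutator ha hb)

theorem Set.commutatorElement_mulIndicator_const {U G : Type*} [Group G] (S T : Set U)
    (a b : G) :
    ⁅S.mulIndicator (fun _ => a), T.mulIndicator (fun _ => b)⁆ =
      (S ∩ T).mulIndicator (fun _ => ⁅a, b⁆) := by
  ext u : 1
  by_cases hS : u ∈ S <;> by_cases hT : u ∈ T <;> simp [commutatorElement_def, hS, hT]

theorem Set.exists_ne_mem_sdiff_of_ncard_add_one_lt {α : Type*} {s t : Set α} (ht : t.Finite)
    (h : t.ncard + 1 < s.ncard) : ∃ u ∈ s \ t, ∃ v ∈ s \ t, u ≠ v :=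
  (Set.one_lt_ncard (Set.finite_of_ncard_pos (by omega)).sdiff).mp
    (by have := Set.le_ncard_sdiff t s ht; omega)

def Equiv.Perm.prodCongrRightHom (U V : Type*) : (U → Perm V) →* Perm (U × V) where
  toFun := prodCongrRight
  map_one' := rfl
  map_mul' _ _ := rfl

@[simp]
theorem Equiv.Perm.prodCongrRightHom_apply {U V : Type*} (σ : U → Perm V) :
    Perm.prodCongrRightHom U V σ = prodCongrRight σ := rfl

theorem val_finRotate {m : ℕ} (i : Fin m) :
    (finRotate m i : ℕ) = if (i : ℕ) + 1 = m then 0 else (i : ℕ) + 1 := by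
  cases m with
  | zero => exact i.elim0
  | succ m => rw [coe_finRotate]; simp [Fin.ext_iff]

section Words

variable {A : Type*} {k ℓ : ℕ}

theorem splitEquiv_apply (t : Fin (k + ℓ) → A) :
    splitEquiv A k ℓ t = (fun i => t (Fin.castAdd ℓ i), fun j => t (Fin.natAdd k j)) := by
  ext <;> simp [splitEquiv, sumArrowEquivProdArrow]

theorem splitEquiv_symm_apply_castAdd (x : (Fin k → A) × (Fin ℓ → A)) (i : Fin k) :
    (splitEquiv A k ℓ).symm x (Fin.castAdd ℓ i) = x.1 i := by
  simp [splitEquiv, sumArrowEquivProdArrow]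

theorem splitEquiv_symm_apply_natAdd (x : (Fin k → A) × (Fin ℓ → A)) (j : Fin ℓ) :
    (splitEquiv A k ℓ).symm x (Fin.natAdd k j) = x.2 j := by
  simp [splitEquiv, sumArrowEquivProdArrow]

/-- `f_{w,p}` with the single control word `w` replaced by a set `S` of control words. -/
noncomputable def guardedPerm (S : Set (Fin k → A)) (p : Perm (Fin ℓ → A)) :
    Perm (Fin (k + ℓ) → A) :=
  (splitEquiv A k ℓ).symm.permCongr (prodCongrRight (S.mulIndicator fun _ => p))

theorem controlledPerm_eq_guardedPerm [DecidableEq A] (w : Fin k → A) (p : Perm (Fin ℓ → A)) :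
    controlledPerm w p = guardedPerm {w} p := by
  rw [controlledPerm, guardedPerm]
  congr 1
  ext ⟨u, v⟩ : 1
  by_cases h : u = w <;> simp [prodCongrRight_apply, h]

theorem guardedPerm_commutatorElement (S T : Set (Fin k → A)) (p q : Perm (Fin ℓ → A)) :
    ⁅guardedPerm S p, guardedPerm T q⁆ = guardedPerm (S ∩ T) ⁅p, q⁆ := by
  simp only [guardedPerm, ← permCongrHom_coe, ← Perm.prodCongrRightHom_apply,
    ← map_commutatorElement, Set.commutatorElement_mulIndicator_const]

theorem guardedPerm_apply_castAdd (S : Set (Fin k → A)) (p : Perm (Fin ℓ → A))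
    (t : Fin (k + ℓ) → A) (i : Fin k) :
    guardedPerm S p t (Fin.castAdd ℓ i) = t (Fin.castAdd ℓ i) := by
  simp [guardedPerm, splitEquiv_apply, prodCongrRight_apply, splitEquiv_symm_apply_castAdd]

theorem guardedPerm_apply_of_lt (S : Set (Fin k → A)) (p : Perm (Fin ℓ → A))
    (t : Fin (k + ℓ) → A) {i : Fin (k + ℓ)} (hi : (i : ℕ) < k) :
    guardedPerm S p t i = t i := by
  rw [← Fin.castAdd_castLT ℓ i hi, guardedPerm_apply_castAdd]

theorem guardedPerm_apply_natAdd (S : Set (Fin k → A)) (p : Perm (Fin ℓ → A))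
    (t : Fin (k + ℓ) → A) (j : Fin ℓ) :
    guardedPerm S p t (Fin.natAdd k j) =
      S.mulIndicator (fun _ => p) (fun i => t (Fin.castAdd ℓ i))
        (fun j => t (Fin.natAdd k j)) j := by
  simp [guardedPerm, splitEquiv_apply, prodCongrRight_apply, splitEquiv_symm_apply_natAdd]

end Words

section Wires

variable {A : Type*} {ℓ m : ℕ}

theorem wirePerm_one : wirePerm (A := A) (1 : Perm (Fin m)) = 1 :=
  rfl

theorem wirePerm_mul (α β : Perm (Fin m)) :
    wirePerm (A := A) (α * β) = wirePerm α * wirePerm β :=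
  rfl

theorem controlledPerm_mem_controlledPerms [DecidableEq A] {k : ℕ} {P : Set (Perm (Fin ℓ → A))}
    (w : Fin k → A) {p : Perm (Fin ℓ → A)} (hp : p ∈ P) :
    controlledPerm w p ∈ ControlledPerms k P :=
  ⟨w, p, hp, 1, by rw [wirePerm_one]; group⟩

theorem oplusId_apply (h : ℓ ≤ m) (f : Perm (Fin ℓ → A)) (u : Fin m → A) (i : Fin m) :
    oplusId h f u i = (splitEquiv A ℓ (m - ℓ)).symm
      (f fun j => u (Fin.castLE h j),
        fun j => u (Fin.cast (Nat.add_sub_cancel' h) (Fin.natAdd ℓ j)))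
      (Fin.cast (Nat.add_sub_cancel' h).symm i) :=
  rfl

theorem oplusId_apply_castLE (h : ℓ ≤ m) (f : Perm (Fin ℓ → A)) (u : Fin m → A) (i : Fin ℓ) :
    oplusId h f u (Fin.castLE h i) = f (fun j => u (Fin.castLE h j)) i :=
  (oplusId_apply h f u _).trans (splitEquiv_symm_apply_castAdd _ i)

theorem oplusId_apply_of_le (h : ℓ ≤ m) (f : Perm (Fin ℓ → A)) (u : Fin m → A) {i : Fin m}
    (hi : ℓ ≤ i) : oplusId h f u i = u i := by
  have hi' : Fin.cast (Nat.add_sub_cancel' h).symm i = Fin.natAdd ℓ ⟨i - ℓ, by omega⟩ :=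
    Fin.ext (by simp only [Fin.val_cast, Fin.val_natAdd]; omega)
  rw [oplusId_apply, hi', splitEquiv_symm_apply_natAdd]
  exact congrArg u (Fin.ext (by simp only [Fin.val_cast, Fin.val_natAdd]; omega))

theorem eq_wirePerm_conj {g f : Perm (Fin m → A)} {α : Perm (Fin m)}
    (h : ∀ v i, g v (α i) = f (fun j => v (α j)) i) :
    g = wirePerm α * f * (wirePerm α)⁻¹ := by
  ext v i
  exact (congrArg (g v) (apply_symm_apply α i)).symm.trans (h v (α.symm i))

theorem IsExtensionOf.wirePerm_conj {f : Perm (Fin ℓ → A)} {g : Perm (Fin m → A)}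
    (hg : IsExtensionOf f g) (β : Perm (Fin m)) :
    IsExtensionOf f (wirePerm β * g * (wirePerm β)⁻¹) := by
  obtain ⟨h, α, rfl⟩ := hg
  refine ⟨h, β * α, ?_⟩
  rw [wirePerm_mul]
  group

end Wires

theorem isExtensionOf_guardedPerm {A : Type*} [DecidableEq A] {n : ℕ} (b : Fin 2) (a : A)
    (p : Perm (Fin n → A)) :
    IsExtensionOf (controlledPerm (fun _ : Fin 1 => a) p)
      (guardedPerm {u : Fin 2 → A | u b = a} p : Perm (Fin (2 + n) → A)) := by
  have h : 1 + n ≤ 2 + n := by omega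
  -- Rotating all wires up by one moves the control wire `0` of the `(1+n)`-ary gate to wire `1`,
  -- its targets to wires `2, …, n+1` and its idle wire to wire `0`; the swap then puts the
  -- control on wire `b`.
  set α := swap (Fin.castAdd n 1) (Fin.castAdd n b) * finRotate (2 + n)
  have hcontrol : α (Fin.castLE h (Fin.castAdd n 0)) = Fin.castAdd n b := by
    have : finRotate (2 + n) (Fin.castLE h (Fin.castAdd n 0)) = Fin.castAdd n 1 := by
      ext
      rw [val_finRotate]
      simp only [Fin.val_castLE, Fin.val_castAdd, Fin.val_zero, Fin.val_one]
      split_ifs <;> omega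
    rw [Perm.mul_apply, this, swap_apply_left]
  have htarget (j : Fin n) : α (Fin.castLE h (Fin.natAdd 1 j)) = Fin.natAdd 2 j := by
    have : finRotate (2 + n) (Fin.castLE h (Fin.natAdd 1 j)) = Fin.natAdd 2 j := by
      ext; rw [val_finRotate]; simp only [Fin.val_castLE, Fin.val_natAdd]; split_ifs <;> omega
    rw [Perm.mul_apply, this]
    apply swap_apply_of_ne_of_ne <;>
      simp only [ne_eq, Fin.ext_iff, Fin.val_natAdd, Fin.val_castAdd, Fin.val_one] <;> omega
  have hidle (i : Fin (2 + n)) (hi : 1 + n ≤ i) : (α i : ℕ) < 2 := by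
    have : finRotate (2 + n) i = Fin.castAdd n 0 := by
      ext; rw [val_finRotate]; simp only [Fin.val_castAdd, Fin.val_zero]; split_ifs <;> omega
    rw [Perm.mul_apply, this, swap_apply_def]
    split_ifs <;> simp only [Fin.val_castAdd] <;> omega
  refine ⟨h, α, eq_wirePerm_conj fun v i => ?_⟩
  rcases lt_or_ge (i : ℕ) (1 + n) with hi | hi
  · obtain ⟨i, rfl⟩ : ∃ i', Fin.castLE h i' = i := ⟨Fin.castLT i hi, rfl⟩
    rw [oplusId_apply_castLE, controlledPerm_eq_guardedPerm]
    refine Fin.addCases (fun c => ?_) (fun j => ?_) i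
    · rw [Fin.fin_one_eq_zero c, hcontrol, guardedPerm_apply_castAdd, guardedPerm_apply_castAdd,
        hcontrol]
    · rw [htarget, guardedPerm_apply_natAdd, guardedPerm_apply_natAdd]
      simp [htarget, hcontrol, Set.mulIndicator_apply, funext_iff]
  · rw [oplusId_apply_of_le h _ _ hi, guardedPerm_apply_of_lt _ _ _ (hidle i hi)]

theorem stmt17_general (A : Type*) [DecidableEq A] (n : ℕ) (X : Set (Fin n → A))
    (hX : 5 ≤ X.ncard) :
    ∀ g ∈ ControlledPerms 2 {s : Equiv.Perm (Fin n → A) | ∃ x y z,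
        x ∈ X ∧ y ∈ X ∧ z ∈ X ∧ x ≠ y ∧ y ≠ z ∧ x ≠ z ∧
        s = Equiv.swap x y * Equiv.swap y z},
      g ∈ Subgroup.closure {g' : Equiv.Perm (Fin (2 + n) → A) |
        ∃ p ∈ ControlledPerms 1 {s : Equiv.Perm (Fin n → A) | ∃ x y z,
          x ∈ X ∧ y ∈ X ∧ z ∈ X ∧ x ≠ y ∧ y ≠ z ∧ x ≠ z ∧
          s = Equiv.swap x y * Equiv.swap y z}, IsExtensionOf p g'} := by
  rintro _ ⟨w, _, ⟨x, y, z, hx, hy, hz, hxy, hyz, hxz, rfl⟩, α, rfl⟩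
  have hxyz : ({x, y, z} : Set (Fin n → A)).ncard + 1 < X.ncard := by
    have := Set.ncard_insert_le x {y, z}
    have := Set.ncard_pair hyz
    omega
  obtain ⟨u, ⟨hu, hu'⟩, v, ⟨hv, hv'⟩, huv⟩ :=
    Set.exists_ne_mem_sdiff_of_ncard_add_one_lt (Set.toFinite _) hxyz
  simp only [Set.mem_insert_iff, Set.mem_singleton_iff, not_or] at hu' hv'
  obtain ⟨hux, huy, huz⟩ := hu'
  obtain ⟨hvx, hvy, hvz⟩ := hv'
  have hw : ({w} : Set (Fin 2 → A)) = {t | t 0 = w 0} ∩ {t | t 1 = w 1} := by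
    ext t; simp [funext_iff, Fin.forall_fin_two]
  rw [controlledPerm_eq_guardedPerm, hw, swap_mul_swap_eq_commutatorElement hxy hxz hyz hux huy
    huz hvx hvy hvz huv, ← guardedPerm_commutatorElement, conjugate_commutatorElement]
  refine Subgroup.commutatorElement_mem _
    (Subgroup.subset_closure ⟨_, ?_, (isExtensionOf_guardedPerm 0 (w 0) _).wirePerm_conj α⟩)
    (Subgroup.subset_closure ⟨_, ?_, (isExtensionOf_guardedPerm 1 (w 1) _).wirePerm_conj α⟩)
  · exact controlledPerm_mem_controlledPerms _
      ⟨x, y, u, hx, hy, hu, hxy, Ne.symm huy, Ne.symm hux, rfl⟩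
  · exact controlledPerm_mem_controlledPerms _
      ⟨x, z, v, hx, hz, hv, hxz, Ne.symm hvz, Ne.symm hvx, rfl⟩

/-- if `X ⊆ A^n` has at least five elements and `P` is the set of `3`-cycles of
distinct elements of `X`, then every `2`-controlled `P`-permutation of `A^(2+n)` belongs to
the subgroup of `Sym(A^(2+n))` generated by all extensions of `1`-controlled
`P`-permutations. -/
theorem stmt17 (A : Type*) [Fintype A] [DecidableEq A] (n : ℕ) (X : Set (Fin n → A))
    (hX : 5 ≤ X.ncard) :
    ∀ g ∈ ControlledPerms 2 {s : Equiv.Perm (Fin n → A) | ∃ x y z,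
        x ∈ X ∧ y ∈ X ∧ z ∈ X ∧ x ≠ y ∧ y ≠ z ∧ x ≠ z ∧
        s = Equiv.swap x y * Equiv.swap y z},
      g ∈ Subgroup.closure {g' : Equiv.Perm (Fin (2 + n) → A) |
        ∃ p ∈ ControlledPerms 1 {s : Equiv.Perm (Fin n → A) | ∃ x y z,
          x ∈ X ∧ y ∈ X ∧ z ∈ X ∧ x ≠ y ∧ y ≠ z ∧ x ≠ z ∧
          s = Equiv.swap x y * Equiv.swap y z}, IsExtensionOf p g'} :=
  stmt17_general A n X hX
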